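/- Let x be a 1-form on a finite connected graph G and let m ∈ F(x) be a minimal form. Then the common value β(x) = β_T over all x-minimal spanning trees T satisfies β(x) = (1/2) · #supp m. -/

import Mathlib

open Classical Finset

/-- A (multi)graph given by oriented edges: each oriented edge `e` has a starting
vertex `head e` and an ending vertex `tail e`, and a reversal involution. -/
structure OGraph (V A : Type) where
  head : A → V
  tail : A → V
  rev : A → A
  rev_rev : ∀ e, rev (rev e) = e
  rev_ne : ∀ e, rev e ≠ e
  head_rev : ∀ e, head (rev e) = tail e

namespace OGraph

variable {V A : Type}

/-- `G.IsWalkFrom l u v` : the list of oriented edges `l` is a walk from `u` to `v`. -/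
def IsWalkFrom (G : OGraph V A) : List A → V → V → Prop
  | [], u, v => u = v
  | e :: l, u, v => G.head e = u ∧ G.IsWalkFrom l (G.tail e) v

def Connected (G : OGraph V A) : Prop := ∀ u v : V, ∃ l : List A, G.IsWalkFrom l u v

/-- A (vector-valued) 1-form on the graph. -/
def IsOneForm (G : OGraph V A) {d : ℕ} (b : A → Fin d → ℝ) : Prop :=
  ∀ e, b (G.rev e) = - b e

/-- `G.InF x b` : `b` is a 1-form with the same flux as `x` through every cycle
(equivalently, every closed walk); this is the set `F(x)`. -/
def InF (G : OGraph V A) {d : ℕ} (x b : A → Fin d → ℝ) : Prop :=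
  G.IsOneForm b ∧ ∀ (u : V) (l : List A), G.IsWalkFrom l u u →
    (l.map b).sum = (l.map x).sum

/-- A closed trail: a nonempty closed walk repeating no (unoriented) edge. -/
def IsClosedTrail (G : OGraph V A) (l : List A) (u : V) : Prop :=
  G.IsWalkFrom l u u ∧ l ≠ [] ∧ l.Pairwise (fun e f => e ≠ f ∧ e ≠ G.rev f)

/-- A spanning tree, as a set of oriented edges closed under reversal:
connected, spanning, and acyclic. -/
def IsSpanningTree (G : OGraph V A) (T : Set A) : Prop :=
  (∀ e ∈ T, G.rev e ∈ T) ∧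
  (∀ u v : V, ∃ l : List A, (∀ e ∈ l, e ∈ T) ∧ G.IsWalkFrom l u v) ∧
  ¬ ∃ (l : List A) (u : V), (∀ e ∈ l, e ∈ T) ∧ G.IsClosedTrail l u

/-- `c` is a fundamental cycle of the edge `e ∉ T` with respect to the spanning
tree `T` : a cycle through `e` all of whose other edges lie in `T`. -/
def FundCycle (G : OGraph V A) (T : Set A) (e : A) (c : List A) : Prop :=
  (∃ u, G.IsClosedTrail c u) ∧ e ∈ c ∧ ∀ f ∈ c, f ≠ e → f ∈ T

/-- `S` chooses one orientation of each edge not in `T`. -/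
def IsOrientation (G : OGraph V A) (T S : Set A) : Prop :=
  (∀ e ∈ S, e ∉ T) ∧ ∀ e, e ∉ T → (e ∈ S ↔ G.rev e ∉ S)

/-- The 1-form `m(·,T)` : zero on the tree and equal to the flux of `x` through
the fundamental cycle `c e` on each non-tree edge `e` (oriented via `S`). -/
noncomputable def mForm (G : OGraph V A) {d : ℕ} (x : A → Fin d → ℝ) (S : Set A)
    (c : A → List A) : A → Fin d → ℝ :=
  fun e => if e ∈ S then ((c e).map x).sum
    else if G.rev e ∈ S then - (((c (G.rev e)).map x).sum) else 0

/-- The number of oriented edges in the support of a 1-form. -/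
noncomputable def suppCard [Fintype A] {d : ℕ} (b : A → Fin d → ℝ) : ℕ :=
  (Finset.univ.filter (fun e => b e ≠ 0)).card

/-- Twice the number `β_T` of fundamental cycles of `T` with nonzero `x`-flux
(each non-tree unoriented edge is counted in both orientations). -/
noncomputable def badCount [Fintype A] {d : ℕ} (x : A → Fin d → ℝ) (T : Set A)
    (c : A → List A) : ℕ :=
  (Finset.univ.filter (fun e => e ∉ T ∧ ((c e).map x).sum ≠ 0)).card

/-- An `x`-minimal spanning tree: the number of fundamental cycles with nonzero
`x`-flux is minimal among all spanning trees. -/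
def IsMinTree [Fintype A] (G : OGraph V A) {d : ℕ} (x : A → Fin d → ℝ) (T : Set A) : Prop :=
  G.IsSpanningTree T ∧ ∃ c : A → List A, (∀ e, e ∉ T → G.FundCycle T e (c e)) ∧
    ∀ (T' : Set A) (c' : A → List A), G.IsSpanningTree T' →
      (∀ e, e ∉ T' → G.FundCycle T' e (c' e)) → badCount x T c ≤ badCount x T' c'

end OGraph

/-! For a spanning tree `T`, the form `m(·, T)` lies in `F(x)`: integrating `x` along `T` gives
a potential, and `x - m(·, T)` is its coboundary, so both have the same flux through every closed
walk. Its support consists of the `2 β_T` oriented non-tree edges with nonzero fundamental flux,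
so minimality of `m` gives `#supp m ≤ 2 β_T`. Conversely, let `T'` be a spanning tree extending a
maximal forest of the zero set of `m`. The fundamental cycle of a non-tree zero of `m` then lies
in that zero set, so its `x`-flux, which equals its `m`-flux, vanishes; hence
`2 β_T' ≤ #supp m`, and `x`-minimality of `T` closes the chain. -/

namespace OGraph

variable {V A : Type} {M : Type*} [AddCommGroup M] (G : OGraph V A)

def RevClosed (T : Set A) : Prop := ∀ e ∈ T, G.rev e ∈ T

def IsTrail (l : List A) : Prop := l.Pairwise (fun e f => e ≠ f ∧ e ≠ G.rev f)

def IsAcyclic (T : Set A) : Prop :=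
  ¬ ∃ (l : List A) (u : V), (∀ e ∈ l, e ∈ T) ∧ G.IsClosedTrail l u

def ReachableIn (E : Set A) (u v : V) : Prop :=
  ∃ l : List A, (∀ e ∈ l, e ∈ E) ∧ G.IsWalkFrom l u v

def reverseWalk (l : List A) : List A := (l.map G.rev).reverse

variable {G}

lemma tail_rev (e : A) : G.tail (G.rev e) = G.head e := by
  rw [← G.head_rev, G.rev_rev]

lemma RevClosed.rev_not_mem {T : Set A} (hT : G.RevClosed T) {e : A} (he : e ∉ T) :
    G.rev e ∉ T :=
  fun h => he (G.rev_rev e ▸ hT _ h)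

lemma IsWalkFrom.append {l₁ l₂ : List A} {u w v : V} (h₁ : G.IsWalkFrom l₁ u w)
    (h₂ : G.IsWalkFrom l₂ w v) : G.IsWalkFrom (l₁ ++ l₂) u v := by
  induction l₁ generalizing u with
  | nil => exact (h₁ : u = w) ▸ h₂
  | cons e l ih => exact ⟨h₁.1, ih h₁.2⟩

lemma IsWalkFrom.of_append {l₁ l₂ : List A} {u v : V} (h : G.IsWalkFrom (l₁ ++ l₂) u v) :
    ∃ w, G.IsWalkFrom l₁ u w ∧ G.IsWalkFrom l₂ w v := by
  induction l₁ generalizing u with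
  | nil => exact ⟨u, rfl, h⟩
  | cons e l ih =>
    obtain ⟨w, h₁, h₂⟩ := ih h.2
    exact ⟨w, ⟨h.1, h₁⟩, h₂⟩

lemma IsWalkFrom.reverseWalk {l : List A} {u v : V} (h : G.IsWalkFrom l u v) :
    G.IsWalkFrom (G.reverseWalk l) v u := by
  induction l generalizing u with
  | nil => exact (h : u = v).symm
  | cons e l ih =>
    simp only [OGraph.reverseWalk, List.map_cons, List.reverse_cons] at ih ⊢
    exact (ih h.2).append ⟨G.head_rev e, (G.tail_rev e).trans h.1⟩

lemma RevClosed.mem_reverseWalk {T : Set A} (hT : G.RevClosed T) {l : List A}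
    (hl : ∀ e ∈ l, e ∈ T) : ∀ e ∈ G.reverseWalk l, e ∈ T := by
  simp only [OGraph.reverseWalk, List.mem_reverse, List.mem_map]
  rintro _ ⟨e, he, rfl⟩
  exact hT e (hl e he)

lemma sum_map_reverseWalk {b : A → M} (hb : ∀ e, b (G.rev e) = -b e) (l : List A) :
    ((G.reverseWalk l).map b).sum = -(l.map b).sum := by
  rw [OGraph.reverseWalk, List.map_reverse, List.sum_reverse, List.map_map]
  induction l with
  | nil => simp
  | cons e l ih => simp [ih, hb, add_comm]

lemma IsWalkFrom.sum_map_eq_add_sub {l : List A} {u v : V} (hw : G.IsWalkFrom l u v)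
    {a b : A → M} {φ : V → M} (h : ∀ e ∈ l, a e = b e + (φ (G.tail e) - φ (G.head e))) :
    (l.map a).sum = (l.map b).sum + (φ v - φ u) := by
  induction l generalizing u with
  | nil => obtain rfl : u = v := hw; simp
  | cons e l ih =>
    simp only [List.map_cons, List.sum_cons, List.forall_mem_cons] at h ⊢
    rw [h.1, ih hw.2 h.2, hw.1]
    abel

lemma _root_.List.exists_eq_append_cons_of_not_pairwise {α : Type*} {R : α → α → Prop}
    {l : List α} (h : ¬ l.Pairwise R) :
    ∃ l₁ a l₂ b l₃, l = l₁ ++ a :: (l₂ ++ b :: l₃) ∧ ¬ R a b := by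
  simp only [List.pairwise_iff_forall_sublist, not_forall] at h
  obtain ⟨a, b, hab, hR⟩ := h
  obtain ⟨r₁, r₂, rfl, ha, hb⟩ := List.cons_sublist_iff.1 hab
  obtain ⟨l₁, l₂, rfl⟩ := List.append_of_mem ha
  obtain ⟨l₂', l₃, rfl⟩ := List.append_of_mem (List.singleton_sublist.1 hb)
  exact ⟨l₁, a, l₂ ++ l₂', b, l₃, by simp, hR⟩

lemma IsWalkFrom.exists_shortcut {l : List A} {u v : V} (hw : G.IsWalkFrom l u v)
    (hl : ¬ G.IsTrail l) :
    ∃ l₁ e l₂ l₃,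
      (l = l₁ ++ e :: (l₂ ++ e :: l₃) ∧ G.IsWalkFrom (l₁ ++ e :: l₃) u v ∧
        G.IsWalkFrom (e :: l₂) (G.head e) (G.head e)) ∨
      (l = l₁ ++ e :: (l₂ ++ G.rev e :: l₃) ∧ G.IsWalkFrom (l₁ ++ l₃) u v ∧
        G.IsWalkFrom l₂ (G.tail e) (G.tail e)) := by
  obtain ⟨l₁, e, l₂, f, l₃, rfl, hef⟩ := List.exists_eq_append_cons_of_not_pairwise hl
  obtain ⟨w₁, hl₁, rfl, hrest⟩ := hw.of_append
  obtain ⟨w₂, hl₂, rfl, hl₃⟩ := hrest.of_append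
  refine ⟨l₁, e, l₂, l₃, ?_⟩
  rcases not_and_or.1 hef with hef | hef <;> rw [not_ne_iff] at hef
  · subst hef
    exact Or.inl ⟨rfl, hl₁.append ⟨rfl, hl₃⟩, ⟨rfl, hl₂⟩⟩
  · obtain rfl : f = G.rev e := by rw [hef, G.rev_rev]
    rw [G.head_rev] at hl₂
    rw [G.tail_rev] at hl₃
    exact Or.inr ⟨rfl, hl₁.append hl₃, hl₂⟩

lemma IsWalkFrom.exists_trail {l : List A} {u v : V} (hw : G.IsWalkFrom l u v) :
    ∃ w ⊆ l, G.IsWalkFrom w u v ∧ G.IsTrail w := by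
  by_cases hl : G.IsTrail l
  · exact ⟨l, List.Subset.refl l, hw, hl⟩
  obtain ⟨l₁, e, l₂, l₃, ⟨rfl, hw', -⟩ | ⟨rfl, hw', -⟩⟩ := hw.exists_shortcut hl
  all_goals
    obtain ⟨w, hwl, hw, hwt⟩ := IsWalkFrom.exists_trail hw'
    refine ⟨w, fun f hf => ?_, hw, hwt⟩
    have := hwl hf
    simp only [List.mem_append, List.mem_cons] at this ⊢
    tauto
termination_by l.length
decreasing_by all_goals subst_vars; simp only [List.length_append, List.length_cons]; omega

/-- A closed walk that is not a trail splits at a repeated edge into two shorter closed walks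
whose fluxes add up to its flux (an edge traversed back and forth contributes
`b e + b (rev e) = 0`). -/
lemma IsAcyclic.sum_eq_zero {T : Set A} (hT : G.IsAcyclic T) {b : A → M}
    (hb : ∀ e, b (G.rev e) = -b e) {l : List A} (hlT : ∀ e ∈ l, e ∈ T) {u : V}
    (hw : G.IsWalkFrom l u u) : (l.map b).sum = 0 := by
  rcases eq_or_ne l [] with rfl | hne
  · rfl
  by_cases hl : G.IsTrail l
  · exact absurd ⟨l, u, hlT, hw, hne, hl⟩ hT
  obtain ⟨l₁, e, l₂, l₃, ⟨rfl, hw₁, hw₂⟩ | ⟨rfl, hw₁, hw₂⟩⟩ :=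
    hw.exists_shortcut hl
  · have h₁ := IsAcyclic.sum_eq_zero hT hb (fun f hf => hlT f (by simp at hf ⊢; tauto)) hw₁
    have h₂ := IsAcyclic.sum_eq_zero hT hb (fun f hf => hlT f (by simp at hf ⊢; tauto)) hw₂
    have hsplit : ((l₁ ++ e :: (l₂ ++ e :: l₃)).map b).sum =
        ((l₁ ++ e :: l₃).map b).sum + ((e :: l₂).map b).sum := by
      simp only [List.map_append, List.map_cons, List.sum_append, List.sum_cons]
      abel
    rw [hsplit, h₁, h₂, add_zero]
  · have h₁ := IsAcyclic.sum_eq_zero hT hb (fun f hf => hlT f (by simp at hf ⊢; tauto)) hw₁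
    have h₂ := IsAcyclic.sum_eq_zero hT hb (fun f hf => hlT f (by simp [hf])) hw₂
    have hsplit : ((l₁ ++ e :: (l₂ ++ G.rev e :: l₃)).map b).sum =
        ((l₁ ++ l₃).map b).sum + (l₂.map b).sum := by
      simp only [List.map_append, List.map_cons, List.sum_append, List.sum_cons, hb]
      abel
    rw [hsplit, h₁, h₂, add_zero]
termination_by l.length
decreasing_by all_goals subst_vars; simp only [List.length_append, List.length_cons]; omega

lemma IsAcyclic.sum_eq_of_isWalkFrom {T : Set A} (hT : G.IsAcyclic T) (hTrev : G.RevClosed T)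
    {b : A → M} (hb : ∀ e, b (G.rev e) = -b e) {l₁ l₂ : List A}
    (hl₁T : ∀ e ∈ l₁, e ∈ T) (hl₂T : ∀ e ∈ l₂, e ∈ T) {u v : V}
    (hl₁ : G.IsWalkFrom l₁ u v) (hl₂ : G.IsWalkFrom l₂ u v) :
    (l₁.map b).sum = (l₂.map b).sum := by
  have h := IsAcyclic.sum_eq_zero hT hb (l := l₁ ++ G.reverseWalk l₂)
    (fun e he => (List.mem_append.1 he).elim (hl₁T e) (hTrev.mem_reverseWalk hl₂T e))
    (hl₁.append hl₂.reverseWalk)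
  rwa [List.map_append, List.sum_append, sum_map_reverseWalk hb, ← sub_eq_add_neg,
    sub_eq_zero] at h

lemma IsClosedTrail.exists_perm_cons {l : List A} {u : V} (h : G.IsClosedTrail l u) {e : A}
    (he : e ∈ l) :
    ∃ w, l.Perm (e :: w) ∧ G.IsWalkFrom w (G.tail e) (G.head e) ∧
      ∀ f ∈ w, f ≠ e ∧ f ≠ G.rev e := by
  obtain ⟨p, q, rfl⟩ := List.append_of_mem he
  obtain ⟨hw, -, hpq⟩ := h
  obtain ⟨a, hp, rfl, hq⟩ := hw.of_append
  refine ⟨q ++ p, List.perm_middle.trans (List.perm_append_comm.cons e), hq.append hp, ?_⟩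
  simp only [List.pairwise_append, List.pairwise_cons, List.mem_cons] at hpq
  obtain ⟨-, ⟨heq, -⟩, hpeq⟩ := hpq
  intro f hf
  rcases List.mem_append.1 hf with hf | hf
  · obtain ⟨hef, herf⟩ := heq f hf
    exact ⟨hef.symm, fun h => herf (by rw [h, G.rev_rev])⟩
  · exact hpeq f hf e (Or.inl rfl)

lemma FundCycle.exists_perm_cons {T : Set A} {e : A} {c : List A} (h : G.FundCycle T e c) :
    ∃ w, c.Perm (e :: w) ∧ (∀ f ∈ w, f ∈ T) ∧ G.IsWalkFrom w (G.tail e) (G.head e) := by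
  obtain ⟨⟨u, hc⟩, he, hcT⟩ := h
  obtain ⟨w, hperm, hw, hwe⟩ := hc.exists_perm_cons he
  exact ⟨w, hperm,
    fun f hf => hcT f (hperm.symm.subset (List.mem_cons_of_mem e hf)) (hwe f hf).1, hw⟩

section FundCycle

variable {T : Set A} (hT : G.IsAcyclic T) (hTrev : G.RevClosed T) {b : A → M}
  (hb : ∀ e, b (G.rev e) = -b e) {e : A}
include hT hTrev hb

lemma FundCycle.sum_eq {c : List A} (hc : G.FundCycle T e c) {w : List A}
    (hwT : ∀ f ∈ w, f ∈ T) (hw : G.IsWalkFrom w (G.tail e) (G.head e)) :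
    (c.map b).sum = b e + (w.map b).sum := by
  obtain ⟨w', hperm, hw'T, hw'⟩ := hc.exists_perm_cons
  rw [(hperm.map b).sum_eq, List.map_cons, List.sum_cons,
    hT.sum_eq_of_isWalkFrom hTrev hb hw'T hwT hw' hw]

lemma FundCycle.sum_congr {c₁ c₂ : List A} (hc₁ : G.FundCycle T e c₁)
    (hc₂ : G.FundCycle T e c₂) : (c₁.map b).sum = (c₂.map b).sum := by
  obtain ⟨w, -, hwT, hw⟩ := hc₂.exists_perm_cons
  rw [hc₁.sum_eq hT hTrev hb hwT hw, hc₂.sum_eq hT hTrev hb hwT hw]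

lemma FundCycle.sum_rev {c c' : List A} (hc : G.FundCycle T e c)
    (hc' : G.FundCycle T (G.rev e) c') : (c'.map b).sum = -(c.map b).sum := by
  obtain ⟨w, -, hwT, hw⟩ := hc.exists_perm_cons
  have hw' : G.IsWalkFrom (G.reverseWalk w) (G.tail (G.rev e)) (G.head (G.rev e)) := by
    rw [G.tail_rev, G.head_rev]
    exact hw.reverseWalk
  rw [hc'.sum_eq hT hTrev hb (hTrev.mem_reverseWalk hwT) hw', hc.sum_eq hT hTrev hb hwT hw,
    sum_map_reverseWalk hb, hb, neg_add]

end FundCycle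

lemma IsSpanningTree.revClosed {T : Set A} (hT : G.IsSpanningTree T) : G.RevClosed T := hT.1

lemma IsSpanningTree.isAcyclic {T : Set A} (hT : G.IsSpanningTree T) : G.IsAcyclic T := hT.2.2

lemma IsSpanningTree.reachableIn {T : Set A} (hT : G.IsSpanningTree T) (u v : V) :
    G.ReachableIn T u v :=
  hT.2.1 u v

lemma IsSpanningTree.exists_potential {T : Set A} (hT : G.IsSpanningTree T) {b : A → M}
    (hb : ∀ e, b (G.rev e) = -b e) (r : V) :
    ∃ φ : V → M, ∀ (l : List A) (u v : V), (∀ e ∈ l, e ∈ T) → G.IsWalkFrom l u v →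
      (l.map b).sum = φ v - φ u := by
  choose p hpT hp using hT.reachableIn r
  refine ⟨fun v => ((p v).map b).sum, fun l u v hlT hl => ?_⟩
  have h := hT.isAcyclic.sum_eq_of_isWalkFrom hT.revClosed hb (l₁ := p u ++ l)
    (fun e he => (List.mem_append.1 he).elim (hpT u e) (hlT e)) (hpT v) ((hp u).append hl) (hp v)
  rw [List.map_append, List.sum_append] at h
  simp only [← h, add_sub_cancel_left]

lemma RevClosed.exists_isOrientation {T : Set A} (hT : G.RevClosed T) :
    ∃ S, G.IsOrientation T S := by
  refine ⟨{e | e ∉ T ∧ WellOrderingRel e (G.rev e)}, fun e he => he.1, fun e he => ?_⟩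
  simp only [Set.mem_ofPred_eq, G.rev_rev, he, hT.rev_not_mem he, not_false_eq_true, true_and]
  refine ⟨fun h => asymm h, fun h => ?_⟩
  rcases trichotomous_of WellOrderingRel e (G.rev e) with h' | h' | h'
  exacts [h', absurd h'.symm (G.rev_ne e), absurd h' h]

section MForm

variable {d : ℕ} {x : A → Fin d → ℝ} {T S : Set A} {c : A → List A}

lemma mForm_of_mem (hTrev : G.RevClosed T) (hS : G.IsOrientation T S) {e : A} (he : e ∈ T) :
    G.mForm x S c e = 0 := by
  have he' : e ∉ S := fun h => hS.1 e h he
  have hrev : G.rev e ∉ S := fun h => hS.1 _ h (hTrev e he)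
  simp [mForm, he', hrev]

variable (hT : G.IsSpanningTree T) (hx : G.IsOneForm x) (hS : G.IsOrientation T S)
  (hc : ∀ e, e ∉ T → G.FundCycle T e (c e))
include hT hx hS hc

lemma mForm_of_not_mem {e : A} (he : e ∉ T) : G.mForm x S c e = ((c e).map x).sum := by
  by_cases heS : e ∈ S
  · simp [mForm, heS]
  · have hrev : G.rev e ∈ S := not_not.1 fun h => heS ((hS.2 e he).2 h)
    have hrevT := hT.revClosed.rev_not_mem he
    simp [mForm, heS, hrev, (hc e he).sum_rev hT.isAcyclic hT.revClosed hx (hc _ hrevT)]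

lemma suppCard_mForm [Fintype A] : suppCard (G.mForm x S c) = badCount x T c := by
  unfold suppCard badCount
  congr 1
  ext e
  by_cases he : e ∈ T
  · simp [mForm_of_mem hT.revClosed hS he, he]
  · simp [mForm_of_not_mem hT hx hS hc he, he]

lemma mForm_inF : G.InF x (G.mForm x S c) := by
  refine ⟨fun e => ?_, fun u l hl => ?_⟩
  · by_cases he : e ∈ T
    · rw [mForm_of_mem hT.revClosed hS he, mForm_of_mem hT.revClosed hS (hT.revClosed e he),
        neg_zero]
    · have hrev := hT.revClosed.rev_not_mem he
      rw [mForm_of_not_mem hT hx hS hc he, mForm_of_not_mem hT hx hS hc hrev]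
      exact (hc e he).sum_rev hT.isAcyclic hT.revClosed hx (hc _ hrev)
  · obtain ⟨φ, hφ⟩ := hT.exists_potential hx u
    refine ((hl.sum_map_eq_add_sub (b := G.mForm x S c) (φ := φ) fun e _ => ?_).trans
      (by rw [sub_self, add_zero])).symm
    by_cases he : e ∈ T
    · rw [mForm_of_mem hT.revClosed hS he, zero_add]
      simpa using hφ [e] _ _ (by simpa using he) ⟨rfl, rfl⟩
    · obtain ⟨w, -, hwT, hw⟩ := (hc e he).exists_perm_cons
      rw [mForm_of_not_mem hT hx hS hc he, (hc e he).sum_eq hT.isAcyclic hT.revClosed hx hwT hw,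
        hφ w _ _ hwT hw]
      abel

end MForm

lemma suppCard_le_badCount [Fintype A] {d : ℕ} {x m : A → Fin d → ℝ} (hx : G.IsOneForm x)
    (hmin : ∀ b : A → Fin d → ℝ, G.InF x b → suppCard m ≤ suppCard b) {T : Set A}
    (hT : G.IsSpanningTree T) {c : A → List A} (hc : ∀ e, e ∉ T → G.FundCycle T e (c e)) :
    suppCard m ≤ badCount x T c := by
  obtain ⟨S, hS⟩ := hT.revClosed.exists_isOrientation
  rw [← suppCard_mForm hT hx hS hc]
  exact hmin _ (mForm_inF hT hx hS hc)

lemma badCount_congr [Fintype A] {d : ℕ} {x : A → Fin d → ℝ} (hx : G.IsOneForm x)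
    {T : Set A} (hT : G.IsSpanningTree T) {c₁ c₂ : A → List A}
    (hc₁ : ∀ e, e ∉ T → G.FundCycle T e (c₁ e))
    (hc₂ : ∀ e, e ∉ T → G.FundCycle T e (c₂ e)) :
    badCount x T c₁ = badCount x T c₂ := by
  unfold badCount
  congr 1
  refine Finset.filter_congr fun e _ => and_congr_right fun he => ?_
  rw [(hc₁ e he).sum_congr hT.isAcyclic hT.revClosed hx (hc₂ e he)]

section Reachable

variable {E : Set A}

lemma ReachableIn.symm (hE : G.RevClosed E) {u v : V} (h : G.ReachableIn E u v) :
    G.ReachableIn E v u :=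
  let ⟨l, hlE, hl⟩ := h
  ⟨G.reverseWalk l, hE.mem_reverseWalk hlE, hl.reverseWalk⟩

lemma ReachableIn.mono {E' : Set A} (hEE' : E ⊆ E') {u v : V} (h : G.ReachableIn E u v) :
    G.ReachableIn E' u v :=
  let ⟨l, hlE, hl⟩ := h
  ⟨l, fun e he => hEE' (hlE e he), hl⟩

lemma reachableIn_of_isWalkFrom (hE : ∀ e, G.ReachableIn E (G.head e) (G.tail e))
    {l : List A} {u v : V} (hl : G.IsWalkFrom l u v) : G.ReachableIn E u v := by
  induction l generalizing u with
  | nil => exact ⟨[], by simp, hl⟩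
  | cons e l ih =>
    obtain ⟨l₁, hl₁E, hl₁⟩ := hl.1 ▸ hE e
    obtain ⟨l₂, hl₂E, hl₂⟩ := ih hl.2
    exact ⟨l₁ ++ l₂, fun f hf => (List.mem_append.1 hf).elim (hl₁E f) (hl₂E f),
      hl₁.append hl₂⟩

/-- A closed trail through the new edge would give a path in `E` between its endpoints. -/
lemma IsAcyclic.union_pair (hE : G.IsAcyclic E) (hErev : G.RevClosed E) {e : A}
    (he : ¬ G.ReachableIn E (G.head e) (G.tail e)) : G.IsAcyclic (E ∪ {e, G.rev e}) := by
  rintro ⟨l, u, hlE, hl⟩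
  by_cases hall : ∀ f ∈ l, f ∈ E
  · exact hE ⟨l, u, hall, hl⟩
  push Not at hall
  obtain ⟨f, hfl, hfE⟩ := hall
  have hf : f = e ∨ f = G.rev e := by simpa [hfE] using hlE f hfl
  obtain ⟨w, hperm, hw, hwf⟩ := hl.exists_perm_cons hfl
  have hwE : ∀ g ∈ w, g ∈ E := by
    intro g hg
    have hgl := hlE g (hperm.symm.subset (List.mem_cons_of_mem f hg))
    obtain ⟨hgf, hgf'⟩ := hwf g hg
    rcases hf with rfl | rfl
    · simpa [hgf, hgf'] using hgl
    · rw [G.rev_rev] at hgf'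
      simpa [hgf, hgf'] using hgl
  have hreach : G.ReachableIn E (G.tail f) (G.head f) := ⟨w, hwE, hw⟩
  rcases hf with rfl | rfl
  · exact he (hreach.symm hErev)
  · rw [G.tail_rev, G.head_rev] at hreach
    exact he hreach

end Reachable

lemma exists_isAcyclic_reachableIn_of_subset [Finite A] {F E : Set A} (hFE : F ⊆ E) (hErev : G.RevClosed E)
    (hF : G.IsAcyclic F) (hFrev : G.RevClosed F) :
    ∃ T, F ⊆ T ∧ T ⊆ E ∧ G.IsAcyclic T ∧ G.RevClosed T ∧
      ∀ e ∈ E, G.ReachableIn T (G.head e) (G.tail e) := by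
  obtain ⟨T, ⟨hFT, hTE, hT, hTrev⟩, hmax⟩ :=
    (Set.toFinite {T | F ⊆ T ∧ T ⊆ E ∧ G.IsAcyclic T ∧ G.RevClosed T}).exists_maximal
      ⟨F, subset_rfl, hFE, hF, hFrev⟩
  refine ⟨T, hFT, hTE, hT, hTrev, fun e he => by_contra fun hne => ?_⟩
  have heT : e ∉ T := fun h => hne ⟨[e], by simpa using h, rfl, rfl⟩
  have hmem : T ∪ {e, G.rev e} ∈
      {T | F ⊆ T ∧ T ⊆ E ∧ G.IsAcyclic T ∧ G.RevClosed T} := by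
    refine ⟨hFT.trans Set.subset_union_left,
      Set.union_subset hTE (Set.insert_subset he (Set.singleton_subset_iff.2 (hErev e he))),
      hT.union_pair hTrev hne, ?_⟩
    rintro f (hf | rfl | rfl)
    · exact Or.inl (hTrev f hf)
    · simp
    · simp [G.rev_rev]
  exact heT (hmax hmem Set.subset_union_left (by simp))

/-- Grow a maximal forest inside `D` first, then extend it to a spanning tree. -/
lemma exists_isSpanningTree_reachableIn_inter [Finite A] (hG : G.Connected) {D : Set A}
    (hD : G.RevClosed D) :
    ∃ T, G.IsSpanningTree T ∧ ∀ e ∈ D, G.ReachableIn (T ∩ D) (G.tail e) (G.head e) := by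
  have hempty : G.IsAcyclic ∅ := fun ⟨l, _, hl, _, hne, _⟩ =>
    hne (List.eq_nil_iff_forall_not_mem.2 hl)
  obtain ⟨F, -, hFD, hF, hFrev, hFreach⟩ :=
    exists_isAcyclic_reachableIn_of_subset (Set.empty_subset D) hD hempty (fun _ h => h)
  obtain ⟨T, hFT, -, hT, hTrev, hTreach⟩ :=
    exists_isAcyclic_reachableIn_of_subset (Set.subset_univ F) (fun _ _ => trivial) hF hFrev
  refine ⟨T, ⟨hTrev, fun u v => ?_, hT⟩, fun e he => ?_⟩
  · obtain ⟨l, hl⟩ := hG u v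
    exact reachableIn_of_isWalkFrom (fun e => hTreach e trivial) hl
  · exact ((hFreach e he).symm hFrev).mono (Set.subset_inter hFT hFD)

lemma exists_fundCycle {T E : Set A} (hTrev : G.RevClosed T) (hET : E ⊆ T) {e : A} (he : e ∉ T)
    (hreach : G.ReachableIn E (G.tail e) (G.head e)) :
    ∃ c, G.FundCycle T e c ∧ ∀ f ∈ c, f = e ∨ f ∈ E := by
  obtain ⟨l, hlE, hl⟩ := hreach
  obtain ⟨w, hwl, hw, hwt⟩ := hl.exists_trail
  have hwT : ∀ f ∈ w, f ∈ T := fun f hf => hET (hlE f (hwl hf))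
  have hew : ∀ f ∈ w, e ≠ f ∧ e ≠ G.rev f := fun f hf =>
    ⟨fun h => he (h ▸ hwT f hf), fun h => he (h ▸ hTrev f (hwT f hf))⟩
  have hcyc : G.IsClosedTrail (e :: w) (G.head e) :=
    ⟨⟨rfl, hw⟩, List.cons_ne_nil _ _, List.pairwise_cons.2 ⟨hew, hwt⟩⟩
  refine ⟨e :: w, ⟨⟨_, hcyc⟩, List.mem_cons_self, fun f hf hfe => ?_⟩, fun f hf => ?_⟩
  · exact hwT f ((List.mem_cons.1 hf).resolve_left hfe)
  · exact (List.mem_cons.1 hf).imp_right fun hf => hlE f (hwl hf)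

lemma InF.sum_eq_zero {d : ℕ} {x m : A → Fin d → ℝ} (hm : G.InF x m) {l : List A} {u : V}
    (hl : G.IsWalkFrom l u u) (hml : ∀ e ∈ l, m e = 0) : (l.map x).sum = 0 := by
  rw [← hm.2 u l hl, List.map_congr_left hml, List.map_const', List.sum_replicate, smul_zero]

lemma exists_badCount_le_suppCard [Fintype A] (hG : G.Connected) {d : ℕ}
    {x m : A → Fin d → ℝ} (hm : G.InF x m) :
    ∃ T c, G.IsSpanningTree T ∧ (∀ e, e ∉ T → G.FundCycle T e (c e)) ∧
      badCount x T c ≤ suppCard m := by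
  obtain ⟨T, hT, hreach⟩ := exists_isSpanningTree_reachableIn_inter hG (D := {e | m e = 0})
    fun e (he : m e = 0) => by simp [Set.mem_ofPred_eq, hm.1 e, he]
  have hcyc : ∀ e, e ∉ T →
      ∃ c, G.FundCycle T e c ∧ ((c.map x).sum ≠ 0 → m e ≠ 0) := by
    intro e heT
    by_cases hme : m e = 0
    · obtain ⟨c, hc, hcm⟩ :=
        exists_fundCycle hT.revClosed Set.inter_subset_left heT (hreach e hme)
      obtain ⟨u, hcu⟩ := hc.1
      refine ⟨c, hc, fun hflux => absurd (hm.sum_eq_zero hcu.1 fun f hf => ?_) hflux⟩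
      rcases hcm f hf with rfl | hf
      exacts [hme, hf.2]
    · obtain ⟨c, hc, -⟩ := exists_fundCycle hT.revClosed subset_rfl heT (hT.reachableIn _ _)
      exact ⟨c, hc, fun _ => hme⟩
  choose! c hc hcm using hcyc
  refine ⟨T, c, hT, hc, Finset.card_le_card fun e he => ?_⟩
  simp only [Finset.mem_filter, Finset.mem_univ, true_and] at he ⊢
  exact hcm e he.1 he.2

end OGraph

theorem minTree_badCount_eq_suppCard_general {V A : Type} [Fintype A] {d : ℕ}
    (G : OGraph V A) (hG : G.Connected)
    (x : A → Fin d → ℝ) (hx : G.IsOneForm x)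
    (m : A → Fin d → ℝ) (hm : G.InF x m)
    (hmin : ∀ b : A → Fin d → ℝ, G.InF x b → OGraph.suppCard m ≤ OGraph.suppCard b)
    (T : Set A) (c : A → List A)
    (hT : G.IsMinTree x T) (hc : ∀ e, e ∉ T → G.FundCycle T e (c e)) :
    OGraph.badCount x T c = OGraph.suppCard m := by
  obtain ⟨hTtree, c₀, hc₀, hTmin⟩ := hT
  obtain ⟨T', c', hT', hc', hT'supp⟩ := G.exists_badCount_le_suppCard hG hm
  refine le_antisymm ?_ (G.suppCard_le_badCount hx hmin hTtree hc)
  calc OGraph.badCount x T c = OGraph.badCount x T c₀ := G.badCount_congr hx hTtree hc hc₀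
    _ ≤ OGraph.badCount x T' c' := hTmin T' c' hT' hc'
    _ ≤ OGraph.suppCard m := hT'supp

/-- Let `x` be a 1-form on a finite connected graph `G` and let
`m ∈ F(x)` be a minimal form. Then the common value `β(x) = β_T` over all
`x`-minimal spanning trees `T` satisfies `β(x) = (1/2)·#supp m`. Here
`badCount x T c = 2 β_T` counts the oriented non-tree edges whose fundamental
cycle has nonzero `x`-flux, so the identity reads `badCount x T c = #supp m`. -/
theorem minTree_badCount_eq_suppCard {V A : Type} [Fintype V] [Fintype A] {d : ℕ}
    (G : OGraph V A) (hG : G.Connected)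
    (x : A → Fin d → ℝ) (hx : G.IsOneForm x)
    (m : A → Fin d → ℝ) (hm : G.InF x m)
    (hmin : ∀ b : A → Fin d → ℝ, G.InF x b → OGraph.suppCard m ≤ OGraph.suppCard b)
    (T : Set A) (c : A → List A)
    (hT : G.IsMinTree x T) (hc : ∀ e, e ∉ T → G.FundCycle T e (c e)) :
    OGraph.badCount x T c = OGraph.suppCard m :=
  minTree_badCount_eq_suppCard_general G hG x hx m hm hmin T c hT hc
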